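/- Let S ∈ GL(4n, ℝ) with blocks S = [[A,B],[C,D]] satisfy A Γ Cᵀ + B Γ Dᵀ = 0 for all symmetric Γ ∈ ℝ^{2n×2n}. Then A X Cᵀ + B X Dᵀ = 0 for all (not necessarily symmetric) X ∈ ℝ^{2n×2n}. -/

import Mathlib

/-!
Let `P = 1 ⊕ 0`. A block matrix is block diagonal iff it commutes with `P`. Taking `Γ = 1` shows
that `S Sᵀ` is block diagonal, and since `S (X ⊕ X) Sᵀ = (S (X ⊕ X) S⁻¹) (S Sᵀ)`, the matrix
`S (X ⊕ X) Sᵀ` is block diagonal iff `X ⊕ X` commutes with `S⁻¹ P S`. That condition is preserved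
by sums and products of `X`'s, and the symmetric matrices generate the whole matrix algebra
(`Eᵢⱼ = Eᵢᵢ (Eᵢⱼ + Eⱼᵢ)`), so it passes from symmetric `Γ` to all `X`.
-/

open Matrix

theorem Commute.mul_units_right_iff {M : Type*} [Monoid M] {a b : M} {g : Mˣ}
    (h : Commute a g) : Commute a (b * g) ↔ Commute a b :=
  ⟨fun hbg => by simpa using hbg.mul_right h.units_inv_right, fun hb => hb.mul_right h⟩

theorem Commute.units_conj_right_iff {M : Type*} [Monoid M] {a b : M} (u : Mˣ) :
    Commute a (u * b * ↑u⁻¹) ↔ Commute (↑u⁻¹ * a * u) b := by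
  rw [commute_iff_eq, commute_iff_eq, ← (u⁻¹).mul_right_inj, ← u.mul_left_inj]
  simp only [mul_assoc, Units.inv_mul_cancel_left, Units.inv_mul, mul_one]

theorem Commute.units_mul_mul_right_iff {M : Type*} [Monoid M] {a : M} (u v : Mˣ)
    (h : Commute a (u * v)) (y : M) :
    Commute a (u * y * v) ↔ Commute (↑u⁻¹ * a * u) y := by
  have hsplit : (u * y * v : M) = u * y * ↑u⁻¹ * ↑(u * v) := by simp [mul_assoc]
  rw [hsplit, Commute.mul_units_right_iff (by rwa [Units.val_mul]), Commute.units_conj_right_iff]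

namespace Matrix

variable {m n k R : Type*} [Fintype m] [DecidableEq m] [CommRing R]

theorem adjoin_isSymm_eq_top :
    Algebra.adjoin R {Γ : Matrix m m R | Γ.IsSymm} = ⊤ := by
  refine eq_top_iff.2 fun X _ => ?_
  rw [matrix_eq_sum_single X]
  refine Subalgebra.sum_mem _ fun i _ => Subalgebra.sum_mem _ fun j _ => ?_
  rw [← mul_one (X i j), ← smul_eq_mul, ← smul_single]
  refine Subalgebra.smul_mem _ ?_ _
  have hdiag : ∀ i, single i i (1 : R) ∈ Algebra.adjoin R {Γ : Matrix m m R | Γ.IsSymm} :=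
    fun i => Algebra.subset_adjoin (transpose_single i i 1)
  obtain rfl | hij := eq_or_ne i j
  · exact hdiag i
  have hsplit : single i j (1 : R) = single i i 1 * (single i j 1 + single j i 1) := by
    simp [mul_add, hij]
  rw [hsplit]
  refine Subalgebra.mul_mem _ (hdiag i) (Algebra.subset_adjoin ?_)
  simp [IsSymm, add_comm]

theorem commute_of_forall_isSymm {A : Type*} [Semiring A] [Algebra R A]
    (f : Matrix m m R →ₐ[R] A) {a : A} (h : ∀ Γ : Matrix m m R, Γ.IsSymm → Commute a (f Γ))
    (X : Matrix m m R) : Commute a (f X) := by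
  have hle : Algebra.adjoin R {Γ : Matrix m m R | Γ.IsSymm} ≤
      (Subalgebra.centralizer R {a}).comap f :=
    Algebra.adjoin_le fun Γ hΓ =>
      (Subalgebra.mem_centralizer_iff R).2 fun _ ha => ha ▸ (h Γ hΓ).eq
  rw [adjoin_isSymm_eq_top] at hle
  exact (Subalgebra.mem_centralizer_iff R).1 (hle (Algebra.mem_top (x := X))) a rfl

@[simps]
def fromBlocksDiagAlgHom : Matrix m m R →ₐ[R] Matrix (m ⊕ m) (m ⊕ m) R where
  toFun X := fromBlocks X 0 0 X
  map_one' := fromBlocks_one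
  map_mul' X Y := by simp [fromBlocks_multiply]
  map_zero' := fromBlocks_zero
  map_add' X Y := by simp [fromBlocks_add]
  commutes' r := by simp [algebraMap_eq_diagonal, fromBlocks_diagonal]

theorem commute_fromBlocks_one_zero_iff [Fintype n] [DecidableEq n]
    {A : Matrix m m R} {B : Matrix m n R} {C : Matrix n m R} {D : Matrix n n R} :
    Commute (fromBlocks 1 0 0 0) (fromBlocks A B C D) ↔ B = 0 ∧ C = 0 := by
  simp [Commute, SemiconjBy, fromBlocks_multiply, fromBlocks_inj, eq_comm]

omit [Fintype m] [DecidableEq m] in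
theorem fromBlocks_mul_fromBlocks_diag_mul_transpose [Fintype k] [Fintype n]
    (A B : Matrix m k R) (C D : Matrix n k R) (X : Matrix k k R) :
    fromBlocks A B C D * fromBlocks X 0 0 X * (fromBlocks A B C D)ᵀ =
      fromBlocks (A * X * Aᵀ + B * X * Bᵀ) (A * X * Cᵀ + B * X * Dᵀ)
        (C * X * Aᵀ + D * X * Bᵀ) (C * X * Cᵀ + D * X * Dᵀ) := by
  simp [fromBlocks_transpose, fromBlocks_multiply, Matrix.mul_assoc]

end Matrix

/-- If `S = [[A,B],[C,D]]` is invertible and `A Γ Cᵀ + B Γ Dᵀ = 0` for all symmetric `Γ`,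
then in fact `A X Cᵀ + B X Dᵀ = 0` for all matrices `X`. -/
theorem condition_extends_to_all_matrices
    (n : ℕ) (A B C D : Matrix (Fin (2 * n)) (Fin (2 * n)) ℝ)
    (hS : IsUnit (Matrix.fromBlocks A B C D))
    (hΓ : ∀ Γ : Matrix (Fin (2 * n)) (Fin (2 * n)) ℝ, Γ.IsSymm →
      A * Γ * Cᵀ + B * Γ * Dᵀ = 0) :
    ∀ X : Matrix (Fin (2 * n)) (Fin (2 * n)) ℝ, A * X * Cᵀ + B * X * Dᵀ = 0 := by
  set P : Matrix (Fin (2 * n) ⊕ Fin (2 * n)) (Fin (2 * n) ⊕ Fin (2 * n)) ℝ := fromBlocks 1 0 0 0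
  have hblock : ∀ X : Matrix (Fin (2 * n)) (Fin (2 * n)) ℝ,
      Commute P (fromBlocks A B C D * fromBlocksDiagAlgHom X * (fromBlocks A B C D)ᵀ) ↔
        A * X * Cᵀ + B * X * Dᵀ = 0 ∧ C * X * Aᵀ + D * X * Bᵀ = 0 := fun X => by
    rw [fromBlocksDiagAlgHom_apply, fromBlocks_mul_fromBlocks_diag_mul_transpose,
      commute_fromBlocks_one_zero_iff]
  have hsymm : ∀ Γ : Matrix (Fin (2 * n)) (Fin (2 * n)) ℝ, Γ.IsSymm →
      Commute P (fromBlocks A B C D * fromBlocksDiagAlgHom Γ * (fromBlocks A B C D)ᵀ) :=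
    fun Γ hΓs => (hblock Γ).2 ⟨hΓ Γ hΓs, by
      simpa [transpose_add, transpose_mul, hΓs.eq, Matrix.mul_assoc] using
        congrArg transpose (hΓ Γ hΓs)⟩
  obtain ⟨v, hv⟩ := (isUnit_transpose _).2 hS
  obtain ⟨u, hu⟩ := hS
  have hconj := Commute.units_mul_mul_right_iff (a := P) u v
  rw [hu, hv] at hconj
  specialize hconj (by simpa using hsymm 1 isSymm_one)
  intro X
  refine ((hblock X).1 ((hconj _).2 ?_)).1
  exact commute_of_forall_isSymm _ (fun Γ hΓs => (hconj _).1 (hsymm Γ hΓs)) X
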